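/- Moment representation: if J is the four-banded matrix acting on the column of vector polynomials by J (B_0, B_1, …)ᵀ = z (B_0, B_1, …)ᵀ, then for each n ≥ 0 the n-th moment satisfies U(z^n P_0) = C_0^{-1} (J^n)_{11} C_0, where P_0(z) = (1, z)ᵀ, C_0 = [[1,0],[−a_1,1]], and (J^n)_{11} is the leading 2×2 block of J^n. -/

import Mathlib

/-!
Iterating the recurrence `z P_i = ∑_j J_{ij} P_j` gives `zⁿ P_i = ∑_j (Jⁿ)_{ij} P_j`,
a finite sum because `Jⁿ` has only `n` superdiagonals. Grouped into blocks this reads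
`zⁿ B₀ = ∑_q (Jⁿ)_{0q} B_q`, and applying `U` leaves only `U(zⁿ B₀) = (Jⁿ)_{00} C₀`.
Since `B₀ = C₀ P₀` with `C₀` invertible, `U(zⁿ P₀) = C₀⁻¹ U(zⁿ B₀)`.
-/

open Polynomial Matrix Finset

noncomputable section

/-- Auxiliary shifted sequence: `Paux (n+2) = P_n`. -/
def Paux (a b c : ℕ → ℂ) : ℕ → Polynomial ℂ
  | 0 => 0
  | 1 => 0
  | 2 => 1
  | n + 3 =>
      (X - C (a (n + 1))) * Paux a b c (n + 2)
        - C (b n) * Paux a b c (n + 1) - C (c (n - 1)) * Paux a b c n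

/-- The polynomials `P_n` of the four-term recurrence. -/
def Pp (a b c : ℕ → ℂ) (n : ℕ) : Polynomial ℂ := Paux a b c (n + 2)

/-- The vector polynomials `B_m = (P_{2m}, P_{2m+1})ᵀ`. -/
def Bv (a b c : ℕ → ℂ) (m : ℕ) : Fin 2 → Polynomial ℂ :=
  ![Pp a b c (2 * m), Pp a b c (2 * m + 1)]

/-- The infinite four-banded matrix `J` (0-based indices). -/
def Jmat (a b c : ℕ → ℂ) (i j : ℕ) : ℂ :=
  if i = j then a (i + 1)
  else if j = i + 1 then 1
  else if i = j + 1 then b (j + 1)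
  else if i = j + 2 then c (j + 1)
  else 0

/-- The `n`-th power of `J`; since row `i` of `J` has its nonzero entries in columns
`≤ i + 1`, this finite sum is the genuine matrix product. -/
def Jpow (a b c : ℕ → ℂ) : ℕ → ℕ → ℕ → ℂ
  | 0 => fun i j => if i = j then 1 else 0
  | n + 1 => fun i j => ∑ k ∈ Finset.range (i + 2), Jmat a b c i k * Jpow a b c n k j

/-- The 2×2 block of an infinite matrix at (0-based) block position `(p,q)`. -/
def blk (M : ℕ → ℕ → ℂ) (p q : ℕ) : Matrix (Fin 2) (Fin 2) ℂ :=
  Matrix.of fun r s : Fin 2 => M (2 * p + (r : ℕ)) (2 * q + (s : ℕ))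

/-- The matrix `C₀ = [[1,0],[−a₁,1]]`. -/
def C0mat (a : ℕ → ℂ) : Matrix (Fin 2) (Fin 2) ℂ := !![1, 0; -(a 1), 1]

/-- The vector `P₀(z) = (1, z)ᵀ`. -/
def P0vec : Fin 2 → Polynomial ℂ := ![1, X]

lemma Paux_add_three (a b c : ℕ → ℂ) (i : ℕ) :
    Paux a b c (i + 3) = (X - C (a (i + 1))) * Paux a b c (i + 2)
      - C (b i) * Paux a b c (i + 1) - C (c (i - 1)) * Paux a b c i := by
  rw [Paux]

lemma X_mul_Paux (a b c : ℕ → ℂ) (i : ℕ) :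
    X * Paux a b c (i + 2) = Paux a b c (i + 3) + C (a (i + 1)) * Paux a b c (i + 2)
      + C (b i) * Paux a b c (i + 1) + C (c (i - 1)) * Paux a b c i := by
  rw [Paux_add_three]; ring

lemma Pp_zero (a b c : ℕ → ℂ) : Pp a b c 0 = 1 := rfl

lemma Pp_one (a b c : ℕ → ℂ) : Pp a b c 1 = X - C (a 1) := by
  simp [Pp, Paux]

section Jmat

variable (a b c : ℕ → ℂ)

lemma Jmat_self (i : ℕ) : Jmat a b c i i = a (i + 1) := by simp [Jmat]

lemma Jmat_succ_right (i : ℕ) : Jmat a b c i (i + 1) = 1 := by simp [Jmat]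

lemma Jmat_succ_left (j : ℕ) : Jmat a b c (j + 1) j = b (j + 1) := by
  simp only [Jmat]; split_ifs <;> first | rfl | omega

lemma Jmat_add_two_left (j : ℕ) : Jmat a b c (j + 2) j = c (j + 1) := by
  simp only [Jmat]; split_ifs <;> first | rfl | omega

lemma Jmat_eq_zero_of_add_three_le {i j : ℕ} (h : j + 3 ≤ i) : Jmat a b c i j = 0 := by
  simp only [Jmat]; split_ifs <;> first | rfl | omega

end Jmat

lemma X_mul_Pp (a b c : ℕ → ℂ) (i : ℕ) :
    X * Pp a b c i = ∑ j ∈ range (i + 2), C (Jmat a b c i j) * Pp a b c j := by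
  simp only [Pp, X_mul_Paux]
  match i with
  | 0 => simp [sum_range_succ, Jmat_self, Jmat_succ_right, Paux]
  | 1 => simp [sum_range_succ, Jmat_self, Jmat_succ_right, Jmat_succ_left, Paux]; ring
  | m + 2 =>
    have hfar : ∑ j ∈ range m, C (Jmat a b c (m + 2) j) * Paux a b c (j + 2) = 0 :=
      sum_eq_zero fun j hj => by
        rw [Jmat_eq_zero_of_add_three_le a b c (by simp at hj; omega), map_zero, zero_mul]
    simp [sum_range_succ, hfar, Jmat_self, Jmat_succ_right, Jmat_succ_left, Jmat_add_two_left]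
    ring

lemma Jpow_eq_zero_of_lt (a b c : ℕ → ℂ) (n : ℕ) {i j : ℕ} (h : i + n < j) :
    Jpow a b c n i j = 0 := by
  induction n generalizing i with
  | zero => simp only [Jpow]; rw [if_neg (by omega)]
  | succ n ih =>
    exact sum_eq_zero fun k hk => by rw [ih (by simp at hk; omega), mul_zero]

lemma X_pow_mul_Pp (a b c : ℕ → ℂ) (n : ℕ) {i N : ℕ} (hN : i + n < N) :
    X ^ n * Pp a b c i = ∑ j ∈ range N, C (Jpow a b c n i j) * Pp a b c j := by
  induction n generalizing i with
  | zero =>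
    rw [pow_zero, one_mul, sum_eq_single_of_mem i (mem_range.2 (by omega))]
    · simp [Jpow]
    · intro j _ hji
      simp [Jpow, Ne.symm hji]
  | succ n ih =>
    calc X ^ (n + 1) * Pp a b c i
        = ∑ k ∈ range (i + 2), C (Jmat a b c i k) * (X ^ n * Pp a b c k) := by
          rw [pow_succ, mul_assoc, X_mul_Pp, mul_sum]
          exact sum_congr rfl fun k _ => mul_left_comm _ _ _
      _ = ∑ k ∈ range (i + 2), ∑ j ∈ range N,
            C (Jmat a b c i k * Jpow a b c n k j) * Pp a b c j := by
          refine sum_congr rfl fun k hk => ?_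
          rw [ih (by simp at hk; omega), mul_sum]
          exact sum_congr rfl fun j _ => by rw [C_mul, mul_assoc]
      _ = ∑ j ∈ range N, C (Jpow a b c (n + 1) i j) * Pp a b c j := by
          rw [sum_comm]
          exact sum_congr rfl fun j _ => by rw [← sum_mul, ← map_sum]; rfl

lemma Finset.sum_range_two_mul {M : Type*} [AddCommMonoid M] (f : ℕ → M) (m : ℕ) :
    ∑ j ∈ range (2 * m), f j = ∑ q ∈ range m, (f (2 * q) + f (2 * q + 1)) := by
  induction m with
  | zero => simp
  | succ m ih => rw [mul_add_one, sum_range_succ, sum_range_succ, sum_range_succ, ih, add_assoc]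

lemma X_pow_smul_Bv_zero (a b c : ℕ → ℂ) (n : ℕ) :
    (X ^ n : ℂ[X]) • Bv a b c 0 =
      ∑ q ∈ range (n + 1), (blk (Jpow a b c n) 0 q).map C *ᵥ Bv a b c q := by
  ext r : 1
  fin_cases r <;>
  · simp only [Pi.smul_apply, smul_eq_mul, Finset.sum_apply]
    simp only [Bv, blk, mulVec, dotProduct, Fin.sum_univ_two, map_apply, of_apply, Fin.isValue,
      Fin.zero_eta, Fin.mk_one, Fin.coe_ofNat_eq_mod, Nat.zero_mod, Nat.mod_succ, cons_val_zero,
      cons_val_one, cons_val_fin_one, mul_zero, zero_add, add_zero]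
    rw [X_pow_mul_Pp a b c n (N := 2 * (n + 1)) (by omega), sum_range_two_mul]

lemma Bv_zero_eq_mulVec_P0vec (a b c : ℕ → ℂ) : Bv a b c 0 = (C0mat a).map C *ᵥ P0vec := by
  ext r : 1
  fin_cases r
  · simp [Bv, Pp_zero, C0mat, P0vec, mulVec, dotProduct]
  · simp [Bv, Pp_one, C0mat, P0vec, mulVec, dotProduct]
    ring

lemma isUnit_det_C0mat (a : ℕ → ℂ) : IsUnit (C0mat a).det := by
  simp [C0mat, det_fin_two_of]

theorem moments_eq_block_general (a b c : ℕ → ℂ)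
    (U : (Fin 2 → Polynomial ℂ) →ₗ[ℂ] Matrix (Fin 2) (Fin 2) ℂ)
    (hM2 : ∀ (A : Matrix (Fin 2) (Fin 2) ℂ) (Q : Fin 2 → Polynomial ℂ),
      U (A.map C *ᵥ Q) = A * U Q)
    (hU0 : U (Bv a b c 0) = C0mat a)
    (hUm : ∀ m : ℕ, 1 ≤ m → U (Bv a b c m) = 0) :
    ∀ n : ℕ,
      U (fun i => X ^ n * P0vec i) =
        (C0mat a)⁻¹ * blk (Jpow a b c n) 0 0 * C0mat a := by
  intro n
  have hP0 : (X ^ n : ℂ[X]) • P0vec =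
      ((C0mat a)⁻¹).map C *ᵥ ((X ^ n : ℂ[X]) • Bv a b c 0) := by
    rw [Bv_zero_eq_mulVec_P0vec, mulVec_smul, mulVec_mulVec, ← Matrix.map_mul,
      nonsing_inv_mul _ (isUnit_det_C0mat a), Matrix.map_one _ (map_zero C) (map_one C),
      one_mulVec]
  have hBlocks : U ((X ^ n : ℂ[X]) • Bv a b c 0) = blk (Jpow a b c n) 0 0 * C0mat a := by
    rw [X_pow_smul_Bv_zero, map_sum, sum_eq_single_of_mem 0 (mem_range.2 n.succ_pos), hM2, hU0]
    intro q _ hq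
    rw [hM2, hUm q (Nat.one_le_iff_ne_zero.2 hq), mul_zero]
  calc U (fun i => X ^ n * P0vec i) = U ((X ^ n : ℂ[X]) • P0vec) := rfl
    _ = (C0mat a)⁻¹ * blk (Jpow a b c n) 0 0 * C0mat a := by rw [hP0, hM2, hBlocks, mul_assoc]

/-- Moment representation: the `n`-th moment of the normalized vector of functionals is
`U(zⁿ P₀) = C₀⁻¹ (Jⁿ)₁₁ C₀`. -/
theorem moments_eq_block (a b c : ℕ → ℂ) (hb0 : b 0 = 0) (hc0 : c 0 = 0)
    (U : (Fin 2 → Polynomial ℂ) →ₗ[ℂ] Matrix (Fin 2) (Fin 2) ℂ)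
    (hM2 : ∀ (A : Matrix (Fin 2) (Fin 2) ℂ) (Q : Fin 2 → Polynomial ℂ),
      U (A.map C *ᵥ Q) = A * U Q)
    (hU0 : U (Bv a b c 0) = C0mat a)
    (hUm : ∀ m : ℕ, 1 ≤ m → U (Bv a b c m) = 0) :
    ∀ n : ℕ,
      U (fun i => X ^ n * P0vec i) =
        (C0mat a)⁻¹ * blk (Jpow a b c n) 0 0 * C0mat a :=
  moments_eq_block_general a b c U hM2 hU0 hUm
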